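/- arXiv:math/0011265 — 2 statements merged into one kernel-verified Lean document; each statement's English description precedes it below -/
import Mathlib

section
/- In the algebra C' = (Z/2)⟨a₅, a₁₀⟩ / ⟨1 + a₁₀a₅⟩ graded by assigning degree −1 to a₅ and degree 1 to a₁₀, there do not exist elements v of degree −1 and w of degree 1 with vw = 1. -/
open FreeAlgebra

/-- The free unital noncommutative algebra over ℤ/2 on two generators `a₅, a₁₀`
(indexed by `Fin 2`, with `0 ↦ a₅` and `1 ↦ a₁₀`). -/
abbrev NgF2 := FreeAlgebra (ZMod 2) (Fin 2)

namespace NgF2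

noncomputable def a5 : NgF2 := ι (ZMod 2) 0
noncomputable def a10 : NgF2 := ι (ZMod 2) 1

/-- The grading: `deg a₅ = -1`, `deg a₁₀ = 1`. -/
def wt : Fin 2 → ℤ := ![-1, 1]

/-- The submodule of homogeneous elements of degree `d` in the free algebra:
the ℤ/2-span of the monomials (products of generators) of total degree `d`. -/
noncomputable def homog (d : ℤ) : Submodule (ZMod 2) NgF2 :=
  Submodule.span (ZMod 2)
    {x | ∃ l : List (Fin 2), x = (l.map (ι (ZMod 2))).prod ∧ (l.map wt).sum = d}

/-- Quotienting by this relation is quotienting by the two-sided ideal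
generated by `1 + a₁₀a₅`. -/
inductive rel : NgF2 → NgF2 → Prop
  | r : rel (1 + a10 * a5) 0

/-- An element of the quotient `C' = (ℤ/2)⟨a₅,a₁₀⟩/⟨1+a₁₀a₅⟩` has degree `d` if it is
the image of a homogeneous element of degree `d` of the free algebra. -/
def hasDeg (x : RingQuot rel) (d : ℤ) : Prop :=
  ∃ y ∈ homog d, RingQuot.mkAlgHom (ZMod 2) rel y = x

end NgF2


namespace NoInvAux

abbrev M := ℕ →₀ ZMod 2

noncomputable def S : Module.End (ZMod 2) M :=
  Finsupp.lmapDomain (ZMod 2) (ZMod 2) (fun n => n + 1)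

noncomputable def T : Module.End (ZMod 2) M :=
  Finsupp.lcomapDomain (fun n : ℕ => n + 1) (add_left_injective 1)

lemma S_single (n : ℕ) (b : ZMod 2) : S (Finsupp.single n b) = Finsupp.single (n+1) b :=
  Finsupp.mapDomain_single

lemma T_apply (x : M) (n : ℕ) : (T x) n = x (n+1) := rfl

lemma T_single_succ (n : ℕ) (b : ZMod 2) :
    T (Finsupp.single (n+1) b) = Finsupp.single n b := by
  ext m
  rw [T_apply]
  simp [Finsupp.single_apply]

lemma T_single_zero (b : ZMod 2) : T (Finsupp.single 0 b) = 0 := by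
  ext m
  rw [T_apply]
  simp [Finsupp.single_apply]

noncomputable def pi : FreeAlgebra (ZMod 2) (Fin 2) →ₐ[ZMod 2] Module.End (ZMod 2) M :=
  FreeAlgebra.lift (ZMod 2) ![S, T]

lemma pi_i0 : pi (ι (ZMod 2) (0 : Fin 2)) = S := by
  simp [pi, FreeAlgebra.lift_ι_apply]

lemma pi_i1 : pi (ι (ZMod 2) (1 : Fin 2)) = T := by
  simp [pi, FreeAlgebra.lift_ι_apply]

lemma TS : T * S = 1 := by
  apply Finsupp.lhom_ext
  intro n b
  show T (S (Finsupp.single n b)) = Finsupp.single n b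
  rw [S_single, T_single_succ]

lemma pi_rel : ∀ ⦃x y : FreeAlgebra (ZMod 2) (Fin 2)⦄, NgF2.rel x y → pi x = pi y := by
  intro x y h
  cases h
  rw [map_zero, map_add, map_one, map_mul]
  show 1 + pi (ι (ZMod 2) 1) * pi (ι (ZMod 2) 0) = 0
  rw [pi_i0, pi_i1, TS]
  rw [← map_one (algebraMap (ZMod 2) (Module.End (ZMod 2) M)), ← map_add,
    show (1 : ZMod 2) + 1 = 0 by decide, map_zero]

/-- `Ev k` is `e_k` for `k ≥ 0` and `0` otherwise. -/
noncomputable def Ev (k : ℤ) : M := if 0 ≤ k then Finsupp.single k.toNat 1 else 0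

lemma gen_mem (x : Fin 2) (k : ℤ) :
    pi (ι (ZMod 2) x) (Ev k) ∈ Submodule.span (ZMod 2) {Ev (k - NgF2.wt x)} := by
  have hx : x = 0 ∨ x = 1 := by fin_cases x <;> simp
  rcases hx with rfl | rfl
  · have hw : NgF2.wt 0 = -1 := by simp [NgF2.wt]
    rw [pi_i0, hw]
    by_cases hk : 0 ≤ k
    · have h1 : Ev k = Finsupp.single k.toNat 1 := if_pos hk
      have h2 : Ev (k - (-1)) = Finsupp.single (k.toNat + 1) 1 := by
        rw [Ev, if_pos (by omega)]
        congr 1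
        omega
      rw [h1, S_single, ← h2]
      exact Submodule.mem_span_singleton_self _
    · have h0 : Ev k = 0 := if_neg hk
      rw [h0, map_zero]
      exact Submodule.zero_mem _
  · have hw : NgF2.wt 1 = 1 := by simp [NgF2.wt]
    rw [pi_i1, hw]
    by_cases hk1 : 1 ≤ k
    · have h1 : Ev k = Finsupp.single ((k - 1).toNat + 1) 1 := by
        rw [Ev, if_pos (by omega)]
        congr 1
        omega
      have h2 : Ev (k - 1) = Finsupp.single (k - 1).toNat 1 := if_pos (by omega)
      rw [h1, T_single_succ, ← h2]
      exact Submodule.mem_span_singleton_self _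
    · by_cases hk : 0 ≤ k
      · have hk0 : k = 0 := by omega
        subst hk0
        have h1 : Ev 0 = Finsupp.single 0 1 := by simp [Ev]
        rw [h1, T_single_zero]
        exact Submodule.zero_mem _
      · have h0 : Ev k = 0 := if_neg hk
        rw [h0, map_zero]
        exact Submodule.zero_mem _

lemma word_mem (l : List (Fin 2)) (k : ℤ) :
    pi ((l.map (ι (ZMod 2))).prod) (Ev k) ∈
      Submodule.span (ZMod 2) {Ev (k - (l.map NgF2.wt).sum)} := by
  induction l generalizing k with
  | nil => simp [Submodule.mem_span_singleton_self]
  | cons x l ih =>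
    simp only [List.map_cons, List.prod_cons, List.sum_cons, map_mul]
    have h := ih k
    rw [Submodule.mem_span_singleton] at h
    obtain ⟨c, hc⟩ := h
    show pi (ι (ZMod 2) x) (pi ((l.map (ι (ZMod 2))).prod) (Ev k)) ∈ _
    rw [← hc, map_smul]
    have := gen_mem x (k - (l.map NgF2.wt).sum)
    have heq : k - (NgF2.wt x + (l.map NgF2.wt).sum) = k - (l.map NgF2.wt).sum - NgF2.wt x := by
      ring
    rw [heq]
    exact Submodule.smul_mem _ c this

end NoInvAux

/-- In `C' = (ℤ/2)⟨a₅,a₁₀⟩/⟨1+a₁₀a₅⟩`, graded by `deg a₅ = -1`, `deg a₁₀ = 1`,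
there are no elements `v` of degree `-1` and `w` of degree `1` with `vw = 1`. -/
theorem no_inverse_pair_of_degrees :
    ¬ ∃ v w : RingQuot NgF2.rel, NgF2.hasDeg v (-1) ∧ NgF2.hasDeg w 1 ∧ v * w = 1 := by
  rintro ⟨v, w, -, ⟨y, hy, hyw⟩, hvw⟩
  let ρ : RingQuot NgF2.rel →ₐ[ZMod 2] Module.End (ZMod 2) NoInvAux.M :=
    RingQuot.liftAlgHom (ZMod 2) ⟨NoInvAux.pi, NoInvAux.pi_rel⟩
  have hw0 : ρ w (Finsupp.single 0 1) = 0 := by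
    rw [← hyw]
    have hρ : ρ (RingQuot.mkAlgHom (ZMod 2) NgF2.rel y) = NoInvAux.pi y :=
      RingQuot.liftAlgHom_mkAlgHom_apply _ _ _ _
    rw [hρ]
    have key : NgF2.homog 1 ≤ Submodule.comap
        ((LinearMap.applyₗ (Finsupp.single 0 1 : NoInvAux.M)).comp
          (NoInvAux.pi.toLinearMap)) (Submodule.span (ZMod 2) {NoInvAux.Ev (-1)}) := by
      rw [NgF2.homog, Submodule.span_le]
      rintro x ⟨l, rfl, hl⟩
      have hmem := NoInvAux.word_mem l 0
      rw [hl] at hmem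
      norm_num at hmem
      have hEv0 : NoInvAux.Ev 0 = Finsupp.single 0 1 := by simp [NoInvAux.Ev]
      rw [hEv0] at hmem
      exact hmem
    have hmem : NoInvAux.pi y (Finsupp.single 0 1) ∈
        Submodule.span (ZMod 2) {NoInvAux.Ev (-1)} := key hy
    have hEvneg : NoInvAux.Ev (-1) = 0 := by simp [NoInvAux.Ev]
    rw [hEvneg, Submodule.span_zero_singleton, Submodule.mem_bot] at hmem
    exact hmem
  have h1 := congrArg ρ hvw
  rw [map_mul, map_one] at h1
  have h2 := congrArg (fun f : Module.End (ZMod 2) NoInvAux.M => f (Finsupp.single 0 1)) h1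
  simp only [Module.End.mul_apply, hw0, map_zero, Module.End.one_apply] at h2
  exact one_ne_zero (Finsupp.single_eq_zero.mp h2.symm)
end

section
/- With notation as in the paper's Lemma 3.12, β_ℓ^{(1)} = δ_ℓ^{(1)}: the dimension of the degree-ℓ part of the image of the linearized differential ∂^{(1)} on A_ε/A_ε² equals the dimension of the degree-ℓ part of the image of the ideal I in M/M², and both equal the number of generators bᵢ of degree ℓ in the standard form. -/
open FreeAlgebra

namespace NgLem312

variable (k m : ℕ)

/-- Generators: `a₁,…,a_k` (left), `b₁,…,b_k` (middle), `c₁,…,c_{n-2k}` (right). -/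
abbrev G (k m : ℕ) := Fin k ⊕ (Fin k ⊕ Fin m)

abbrev ga (i : Fin k) : G k m := Sum.inl i
abbrev gb (i : Fin k) : G k m := Sum.inr (Sum.inl i)
abbrev gc (i : Fin m) : G k m := Sum.inr (Sum.inr i)

/-- Extraction of the linear part of an element of the free algebra: the coefficients
of the single-letter words, as a finitely supported function on the generators.
This realizes the identification of `M/M²` with the span of the generators. -/
noncomputable def lin : FreeAlgebra (ZMod 2) (G k m) →ₗ[ZMod 2] (G k m →₀ ZMod 2) :=
  (Finsupp.lcomapDomain FreeMonoid.of FreeMonoid.of_injective) ∘ₗ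
    (MonoidAlgebra.coeffLinearEquiv (ZMod 2)).toLinearMap ∘ₗ
    (FreeAlgebra.equivMonoidAlgebraFreeMonoid
      (R := ZMod 2) (X := G k m)).toLinearMap

/-- The constant coefficient (coefficient of the empty word). -/
noncomputable def constCoeff (x : FreeAlgebra (ZMod 2) (G k m)) : ZMod 2 :=
  (FreeAlgebra.equivMonoidAlgebraFreeMonoid (R := ZMod 2) (X := G k m) x).coeff 1

/-- Inclusion of the span of the generators back into the free algebra. -/
noncomputable def emb : (G k m →₀ ZMod 2) →ₗ[ZMod 2] FreeAlgebra (ZMod 2) (G k m) :=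
  Finsupp.linearCombination (ZMod 2) (ι (ZMod 2))

/-- The degree-`ℓ` graded piece of the span of the generators. -/
noncomputable def Vdeg (deg : G k m → ℤ) (ℓ : ℤ) : Submodule (ZMod 2) (G k m →₀ ZMod 2) :=
  Submodule.span (ZMod 2) {v | ∃ g : G k m, deg g = ℓ ∧ v = Finsupp.single g 1}

end NgLem312

/-!
The linear part of the differential sends `aᵢ ↦ bᵢ` and kills the `bᵢ` and `cᵢ`, so the
image of the linearized differential is spanned by the `bᵢ`. For the ideal `I`, send the free
algebra to the trivial square-zero extension `R ⊕ M/M²` by `x ↦ (ε x, x mod M²)`. This is an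
algebra map, and the preimage of `0 ⊕ S` is a two-sided ideal for every subspace `S`. Every
`∂g` has `ε(∂g) = 0`, so taking for `S` the span of the linear parts of the `∂g` shows that
`I` modulo `M²` is spanned by these linear parts, i.e. by the same `bᵢ`.
-/
open TrivSqZeroExt

section FirstOrder

variable {R X : Type*} [CommRing R]

noncomputable def FreeAlgebra.firstOrder : FreeAlgebra R X →ₐ[R] TrivSqZeroExt R (X →₀ R) :=
  lift R fun g => inr (Finsupp.single g 1)

theorem FreeMonoid.of_mul_eq_of_iff {g h : X} {t : FreeMonoid X} :
    FreeMonoid.of g * t = FreeMonoid.of h ↔ g = h ∧ t = 1 := by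
  rw [← FreeMonoid.toList.injective.eq_iff, FreeMonoid.toList_mul, FreeMonoid.toList_of,
    FreeMonoid.toList_of, List.singleton_append, List.cons_eq_cons, ← FreeMonoid.toList_one,
    FreeMonoid.toList.injective.eq_iff]

theorem smul_freeMonoidLift_inr_single (w : FreeMonoid X) (r : R) :
    r • FreeMonoid.lift (fun g => inr (Finsupp.single g (1 : R))) w =
      inl (Finsupp.single w r 1) +
        inr (Finsupp.lcomapDomain (R := R) FreeMonoid.of FreeMonoid.of_injective
          (Finsupp.single w r)) := by
  classical
  induction w using FreeMonoid.inductionOn' generalizing r with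
  | one => ext g <;> simp [Finsupp.lcomapDomain, FreeMonoid.of_ne_one]
  | of_mul g t ih =>
    rw [map_mul, FreeMonoid.lift_eval_of, ← mul_smul_comm, ih]
    ext h
    · simp [FreeMonoid.of_ne_one]
    · simp [Finsupp.lcomapDomain, Finsupp.single_apply, FreeMonoid.of_mul_eq_of_iff, ite_and]

theorem FreeAlgebra.equivMonoidAlgebraFreeMonoid_symm_single (w : FreeMonoid X) (r : R) :
    equivMonoidAlgebraFreeMonoid.symm (MonoidAlgebra.single w r) =
      r • FreeMonoid.lift (ι R) w :=
  MonoidAlgebra.lift_single _ _ _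

theorem FreeAlgebra.firstOrder_apply (x : FreeAlgebra R X) :
    firstOrder x = inl ((equivMonoidAlgebraFreeMonoid x).coeff 1) +
      inr (Finsupp.lcomapDomain (R := R) FreeMonoid.of FreeMonoid.of_injective
        (equivMonoidAlgebraFreeMonoid x).coeff) := by
  obtain ⟨f, rfl⟩ := equivMonoidAlgebraFreeMonoid.symm.surjective x
  rw [AlgEquiv.apply_symm_apply]
  induction f using MonoidAlgebra.induction_linear with
  | zero => simp
  | add f g hf hg =>
    rw [map_add, map_add, hf, hg, MonoidAlgebra.coeff_add, Finsupp.add_apply, map_add, inl_add,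
      inr_add]
    abel
  | single w r =>
    rw [equivMonoidAlgebraFreeMonoid_symm_single, map_smul, ← AlgHom.coe_toMonoidHom,
      FreeMonoid.hom_map_lift, MonoidAlgebra.coeff_single]
    convert smul_freeMonoidLift_inr_single w r using 4
    exact funext fun g => lift_ι_apply _ g

end FirstOrder

section Ideal

variable {R M A : Type*} [CommRing R] [AddCommGroup M] [Module R M] [Module Rᵐᵒᵖ M]
  [IsCentralScalar R M] [Ring A]

def TrivSqZeroExt.twoSidedIdealOfSubmodule (S : Submodule R M) :
    TwoSidedIdeal (TrivSqZeroExt R M) :=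
  .mk' {x | x.fst = 0 ∧ x.snd ∈ S} ⟨rfl, S.zero_mem⟩
    (fun hx hy => ⟨by simp [hx.1, hy.1], S.add_mem hx.2 hy.2⟩)
    (fun hx => ⟨by simp [hx.1], S.neg_mem hx.2⟩)
    (fun hy => ⟨by simp [hy.1], by simpa [hy.1] using S.smul_mem _ hy.2⟩)
    (fun hx => ⟨by simp [hx.1], by simpa [hx.1] using S.smul_mem _ hx.2⟩)

theorem TrivSqZeroExt.snd_mem_of_mem_twoSidedIdealSpan {F : Type*}
    [FunLike F A (TrivSqZeroExt R M)] [RingHomClass F A (TrivSqZeroExt R M)] (φ : F)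
    {s : Set A} {S : Submodule R M} (hs : ∀ y ∈ s, (φ y).fst = 0 ∧ (φ y).snd ∈ S) {x : A}
    (hx : x ∈ TwoSidedIdeal.span s) : (φ x).snd ∈ S := by
  have hle : TwoSidedIdeal.span s ≤ (twoSidedIdealOfSubmodule S).comap φ :=
    TwoSidedIdeal.span_le.2 fun y hy => TwoSidedIdeal.mem_comap φ |>.2 <| by
      simpa [twoSidedIdealOfSubmodule] using hs y hy
  have hφx := TwoSidedIdeal.mem_comap φ |>.1 (hle hx)
  simp only [twoSidedIdealOfSubmodule, TwoSidedIdeal.mem_mk'] at hφx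
  exact hφx.2

end Ideal

theorem Finsupp.finrank_supported_self {R α : Type*} [Semiring R] [StrongRankCondition R]
    (s : Set α) [Finite s] : Module.finrank R (Finsupp.supported R R s) = Nat.card s := by
  have := Fintype.ofFinite s
  rw [(Finsupp.supportedEquivFinsupp s).finrank_eq, Module.finrank_finsupp_self,
    Nat.card_eq_fintype_card]

namespace NgLem312

variable {k m : ℕ}

theorem fst_firstOrder (x : FreeAlgebra (ZMod 2) (G k m)) :
    (FreeAlgebra.firstOrder x).fst = constCoeff k m x := by
  rw [FreeAlgebra.firstOrder_apply]
  simp [constCoeff]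

theorem snd_firstOrder (x : FreeAlgebra (ZMod 2) (G k m)) :
    (FreeAlgebra.firstOrder x).snd = lin k m x := by
  rw [FreeAlgebra.firstOrder_apply]
  simp [lin]

theorem span_lin_image_twoSidedSpan {s : Set (FreeAlgebra (ZMod 2) (G k m))}
    (hs : ∀ y ∈ s, constCoeff k m y = 0) :
    Submodule.span (ZMod 2) (lin k m '' {x | x ∈ TwoSidedIdeal.span s}) =
      Submodule.span (ZMod 2) (lin k m '' s) := by
  refine le_antisymm (Submodule.span_le.2 ?_)
    (Submodule.span_mono (Set.image_mono fun y hy => TwoSidedIdeal.subset_span hy))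
  rintro _ ⟨x, hx, rfl⟩
  rw [← snd_firstOrder]
  refine snd_mem_of_mem_twoSidedIdealSpan FreeAlgebra.firstOrder (fun y hy => ?_) hx
  rw [fst_firstOrder, snd_firstOrder]
  exact ⟨hs y hy, Submodule.subset_span ⟨y, hy, rfl⟩⟩

theorem range_lin_comp_emb
    (D : FreeAlgebra (ZMod 2) (G k m) →ₗ[ZMod 2] FreeAlgebra (ZMod 2) (G k m)) :
    LinearMap.range (lin k m ∘ₗ D ∘ₗ emb k m) =
      Submodule.span (ZMod 2) (Set.range fun g => lin k m (D (ι (ZMod 2) g))) := by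
  rw [← Finsupp.range_linearCombination]
  congr 1
  ext g : 2
  simp [emb]

theorem span_range_eq_supported_range_gb {R : Type*} [Semiring R] (v : G k m → (G k m →₀ R))
    (ha : ∀ i, v (ga k m i) = Finsupp.single (gb k m i) 1) (hb : ∀ i, v (gb k m i) = 0)
    (hc : ∀ i, v (gc k m i) = 0) :
    Submodule.span R (Set.range v) = Finsupp.supported R R (Set.range (gb k m)) := by
  rw [Finsupp.supported_eq_span_single, ← Set.range_comp]
  refine le_antisymm (Submodule.span_le.2 ?_) (Submodule.span_le.2 ?_)
  · rintro _ ⟨i | i | i, rfl⟩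
    · exact Submodule.subset_span ⟨i, (ha i).symm⟩
    · simp [hb]
    · simp [hc]
  · rintro _ ⟨i, rfl⟩
    exact Submodule.subset_span ⟨ga k m i, ha i⟩

theorem Vdeg_eq_supported (deg : G k m → ℤ) (ℓ : ℤ) :
    Vdeg k m deg ℓ = Finsupp.supported (ZMod 2) (ZMod 2) {g | deg g = ℓ} := by
  rw [Vdeg, Finsupp.supported_eq_span_single]
  congr 1
  ext v
  simp [eq_comm]

theorem natCard_range_gb_inter (deg : G k m → ℤ) (ℓ : ℤ) :
    Nat.card ↥(Set.range (gb k m) ∩ {g | deg g = ℓ}) =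
      (Finset.univ.filter fun i : Fin k => deg (gb k m i) = ℓ).card := by
  classical
  have hinj : Function.Injective (gb k m) := Sum.inr_injective.comp Sum.inl_injective
  rw [← Set.image_preimage_eq_range_inter, Nat.card_image_of_injective hinj,
    Nat.card_eq_fintype_card, Fintype.card_subtype]
  congr

end NgLem312

open NgLem312 in
theorem beta_eq_delta_first_order_general {k m : ℕ} (deg : G k m → ℤ)
    (D : FreeAlgebra (ZMod 2) (G k m) →ₗ[ZMod 2] FreeAlgebra (ZMod 2) (G k m))
    (hconst : ∀ g : G k m, constCoeff k m (D (ι (ZMod 2) g)) = 0)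
    (hlin_a : ∀ i : Fin k,
      lin k m (D (ι (ZMod 2) (ga k m i))) = Finsupp.single (gb k m i) 1)
    (hlin_b : ∀ i : Fin k, lin k m (D (ι (ZMod 2) (gb k m i))) = 0)
    (hlin_c : ∀ i : Fin m, lin k m (D (ι (ZMod 2) (gc k m i))) = 0)
    (ℓ : ℤ) :
    Module.finrank (ZMod 2)
        ↥(LinearMap.range (lin k m ∘ₗ D ∘ₗ emb k m) ⊓ Vdeg k m deg ℓ)
      = Module.finrank (ZMod 2)
        ↥(Submodule.span (ZMod 2)
            (lin k m ''
              {x | x ∈ TwoSidedIdeal.span {y | ∃ g : G k m, y = D (ι (ZMod 2) g)}})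
          ⊓ Vdeg k m deg ℓ) ∧
    Module.finrank (ZMod 2)
        ↥(LinearMap.range (lin k m ∘ₗ D ∘ₗ emb k m) ⊓ Vdeg k m deg ℓ)
      = (Finset.univ.filter (fun i : Fin k => deg (gb k m i) = ℓ)).card := by
  have hgens : {y | ∃ g : G k m, y = D (ι (ZMod 2) g)} = Set.range fun g => D (ι (ZMod 2) g) :=
    Set.ext fun _ => exists_congr fun _ => eq_comm
  have hI : Submodule.span (ZMod 2) (lin k m ''
      {x | x ∈ TwoSidedIdeal.span {y | ∃ g : G k m, y = D (ι (ZMod 2) g)}}) =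
      LinearMap.range (lin k m ∘ₗ D ∘ₗ emb k m) := by
    rw [span_lin_image_twoSidedSpan (by rintro _ ⟨g, rfl⟩; exact hconst g), hgens,
      ← Set.range_comp, range_lin_comp_emb]
    rfl
  refine ⟨by rw [hI], ?_⟩
  rw [range_lin_comp_emb, span_range_eq_supported_range_gb _ hlin_a hlin_b hlin_c,
    Vdeg_eq_supported, ← Finsupp.supported_inter, Finsupp.finrank_supported_self,
    natCard_range_gb_inter]

open NgLem312 in
/-- Lemma 3.12 (first-order part): with the linear part of `∂` in standard form
(`∂₁aᵢ = bᵢ`, `∂₁bᵢ = ∂₁cᵢ = 0`) and `∂` of each generator having no constant term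
(augmentation `ε = 0`), the dimension `β_ℓ⁽¹⁾` of the degree-`ℓ` part of the image of
the linearized differential `∂⁽¹⁾` on `M/M²` equals the dimension `δ_ℓ⁽¹⁾` of the
degree-`ℓ` part of the image of the ideal `I = ⟨∂aᵢ⟩` in `M/M²`, and both equal the
number of generators `bᵢ` of degree `ℓ`. -/
theorem beta_eq_delta_first_order {k m : ℕ} (deg : G k m → ℤ)
    (D : FreeAlgebra (ZMod 2) (G k m) →ₗ[ZMod 2] FreeAlgebra (ZMod 2) (G k m))
    (hLeib : ∀ v w, D (v * w) = D v * w + v * D w)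
    (hD2 : ∀ x, D (D x) = 0)
    (hconst : ∀ g : G k m, constCoeff k m (D (ι (ZMod 2) g)) = 0)
    (hlin_a : ∀ i : Fin k,
      lin k m (D (ι (ZMod 2) (ga k m i))) = Finsupp.single (gb k m i) 1)
    (hlin_b : ∀ i : Fin k, lin k m (D (ι (ZMod 2) (gb k m i))) = 0)
    (hlin_c : ∀ i : Fin m, lin k m (D (ι (ZMod 2) (gc k m i))) = 0)
    (ℓ : ℤ) :
    Module.finrank (ZMod 2)
        ↥(LinearMap.range (lin k m ∘ₗ D ∘ₗ emb k m) ⊓ Vdeg k m deg ℓ)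
      = Module.finrank (ZMod 2)
        ↥(Submodule.span (ZMod 2)
            (lin k m ''
              {x | x ∈ TwoSidedIdeal.span {y | ∃ g : G k m, y = D (ι (ZMod 2) g)}})
          ⊓ Vdeg k m deg ℓ) ∧
    Module.finrank (ZMod 2)
        ↥(LinearMap.range (lin k m ∘ₗ D ∘ₗ emb k m) ⊓ Vdeg k m deg ℓ)
      = (Finset.univ.filter (fun i : Fin k => deg (gb k m i) = ℓ)).card :=
  beta_eq_delta_first_order_general deg D hconst hlin_a hlin_b hlin_c ℓ
end
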